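/- If r is the nonzero Gauss remainder of nonzero a, b ∈ ℤ[i] with φ(r) ≥ φ(b) = n, then ℓ∞(b) - min(|Re b|, |Im b|) ≤ wₙ - 3·2^{v₂(b)}. -/

import Mathlib

open GaussianInt

noncomputable section

/-- The sequence w: w_{2k} = 3·2^k, w_{2k+1} = 4·2^k. -/
def w (n : ℕ) : ℤ := if n % 2 = 0 then 3 * 2 ^ (n / 2) else 4 * 2 ^ (n / 2)

/-- 2-adic valuation of gcd(Re z, Im z). -/
def v2 (z : GaussianInt) : ℕ := padicValNat 2 (Int.gcd z.re z.im)

/-- ℓ₁ norm. -/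
def l1 (z : GaussianInt) : ℤ := |z.re| + |z.im|

/-- ℓ∞ norm. -/
def linf (z : GaussianInt) : ℤ := max |z.re| |z.im|

/-- m(z) = min(|Re z|, |Im z|). -/
def mm (z : GaussianInt) : ℤ := min |z.re| |z.im|

/-- The algebraic norm. -/
def Nm (z : GaussianInt) : ℤ := z.re ^ 2 + z.im ^ 2

/-- Graves' formula for the minimal Euclidean function φ on ℤ[i]. -/
def phi (z : GaussianInt) : ℕ :=
  let j := v2 z
  let n := sInf {n : ℕ | |z.re| ≤ 2 ^ j * (w n - 2) ∧ |z.im| ≤ 2 ^ j * (w n - 2)}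
  if l1 z ≤ 2 ^ j * (w (n + 1) - 3) then n + 2 * j else n + 2 * j + 1

/-- Nearest integer, rounding halves down. -/
def nint (x : ℚ) : ℤ := if x - ⌊x⌋ ≤ 1 / 2 then ⌊x⌋ else ⌈x⌉

/-- Gauss quotient: coordinatewise nearest-integer rounding of a·conj(b)/Nm(b). -/
def gq (a b : GaussianInt) : GaussianInt :=
  ⟨nint (((a.re * b.re + a.im * b.im : ℤ) : ℚ) / ((b.re ^ 2 + b.im ^ 2 : ℤ) : ℚ)),
   nint (((a.im * b.re - a.re * b.im : ℤ) : ℚ) / ((b.re ^ 2 + b.im ^ 2 : ℤ) : ℚ))⟩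

/-- Gauss remainder. -/
def gr (a b : GaussianInt) : GaussianInt := a - gq a b * b

/-- The imaginary unit in ℤ[i]. -/
def Ii : GaussianInt := ⟨0, 1⟩

/-- The canonical unit u_z. -/
def uz (z : GaussianInt) : GaussianInt :=
  if |z.re| > |z.im| then (if 0 < z.re then 1 else -1)
  else if |z.im| > |z.re| then (if 0 < z.im then -Ii else Ii)
  else if 0 < z.re then (if 0 < z.im then 1 else Ii)
  else (if 0 < z.im then -Ii else -1)

/-- s(z) = sgn(Im(u_z·z)). -/
def sfun (z : GaussianInt) : ℤ := Int.sign ((uz z * z).im)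

/-!
Write `j = v2 b` and let `n₀` be the index in Graves' formula, so that `linf b ≤ 2ʲ (w n₀ - 2)`,
`φ b = n₀ + 2j + ε` with `ε ∈ {0, 1}`, and `w (n₀ + 2j) = 2ʲ w n₀`. For `ε = 1` the bound follows
from `w n₀ + 1 ≤ w (n₀ + 1)`. For `ε = 0`, since `2ʲ` divides `linf b - mm b`, the bound can only
fail if `linf b - mm b = 2ʲ (w n₀ - 2)`. Then `mm b = 0`, so `2ʲ (w n₀ - 2)` is the gcd of the
coordinates, and parity of `w n₀ - 2` forces `n₀ = 0`: `b` is a unit times `2ʲ` and `φ b = 2j`.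
But rounding gives `2 Nm r ≤ Nm b = 4ʲ`, while `2 ^ φ r ≤ Nm r` for every `r ≠ 0`, so `φ r < φ b`.
-/

lemma w_two_mul (m : ℕ) : w (2 * m) = 3 * 2 ^ m := by simp [w]

lemma w_two_mul_add_one (m : ℕ) : w (2 * m + 1) = 4 * 2 ^ m := by
  simp [w, Nat.add_mod, Nat.add_div]

lemma three_le_w (n : ℕ) : 3 ≤ w n := by
  have := one_le_pow₀ (M₀ := ℤ) (a := 2) (n := n / 2) (by norm_num)
  unfold w; split <;> omega

lemma w_add_two_mul (n j : ℕ) : w (n + 2 * j) = 2 ^ j * w n := by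
  obtain ⟨m, rfl | rfl⟩ := Nat.even_or_odd' n
  · rw [← mul_add, w_two_mul, w_two_mul, pow_add]; ring
  · rw [show 2 * m + 1 + 2 * j = 2 * (m + j) + 1 by ring, w_two_mul_add_one, w_two_mul_add_one,
      pow_add]; ring

lemma w_add_one_le_w_succ (n : ℕ) : w n + 1 ≤ w (n + 1) := by
  obtain ⟨m, rfl | rfl⟩ := Nat.even_or_odd' n
  · rw [w_two_mul, w_two_mul_add_one]
    linarith [one_le_pow₀ (M₀ := ℤ) (a := 2) (n := m) (by norm_num)]
  · rw [show 2 * m + 1 + 1 = 2 * (m + 1) by ring, w_two_mul, w_two_mul_add_one, pow_succ]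
    linarith [one_le_pow₀ (M₀ := ℤ) (a := 2) (n := m) (by norm_num)]

lemma two_pow_le_sq_w_sub_one (n : ℕ) : (2 : ℤ) ^ (n + 2) ≤ (w n - 1) ^ 2 := by
  have h := one_le_pow₀ (M₀ := ℤ) (a := 2) (n := n / 2) (by norm_num)
  obtain ⟨m, rfl | rfl⟩ := Nat.even_or_odd' n
  · rw [w_two_mul, show (2 : ℤ) ^ (2 * m + 2) = 4 * (2 ^ m) ^ 2 by ring]
    simp only [Nat.mul_div_cancel_left m two_pos] at h
    nlinarith
  · rw [w_two_mul_add_one, show (2 : ℤ) ^ (2 * m + 1 + 2) = 8 * (2 ^ m) ^ 2 by ring]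
    simp only [show (2 * m + 1) / 2 = m by omega] at h
    nlinarith

lemma two_dvd_w_sub_two {n : ℕ} (hn : n ≠ 0) : 2 ∣ w n - 2 := by
  obtain ⟨m, rfl | rfl⟩ := Nat.even_or_odd' n
  · obtain ⟨k, rfl⟩ := Nat.exists_eq_succ_of_ne_zero (by omega : m ≠ 0)
    exact ⟨3 * 2 ^ k - 1, by rw [w_two_mul, pow_succ]; ring⟩
  · exact ⟨2 * 2 ^ m - 1, by rw [w_two_mul_add_one]; ring⟩

lemma abs_sub_nint_le (x : ℚ) : |x - nint x| ≤ 1 / 2 := by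
  unfold nint
  split_ifs with h
  · rwa [abs_of_nonneg (by linarith [Int.floor_le x])]
  · have h1 : (⌈x⌉ : ℚ) ≤ ⌊x⌋ + 1 := by exact_mod_cast Int.ceil_le_floor_add_one x
    rw [abs_of_nonpos (by linarith [Int.le_ceil x])]
    linarith

lemma two_mul_abs_sub_nint_mul_le (t N : ℤ) (hN : 0 < N) :
    2 * |t - nint ((t : ℚ) / N) * N| ≤ N := by
  have hNQ : (0 : ℚ) < N := by exact_mod_cast hN
  have key : ((t - nint ((t : ℚ) / N) * N : ℤ) : ℚ) = ((t : ℚ) / N - nint ((t : ℚ) / N)) * N := by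
    push_cast; field_simp
  have : 2 * |((t - nint ((t : ℚ) / N) * N : ℤ) : ℚ)| ≤ N := by
    rw [key, abs_mul, abs_of_pos hNQ]
    nlinarith [abs_sub_nint_le ((t : ℚ) / N)]
  exact_mod_cast this

lemma Nm_pos {z : GaussianInt} (hz : z ≠ 0) : 0 < Nm z := by
  have : z.re ≠ 0 ∨ z.im ≠ 0 := by
    by_contra! h
    exact hz (Zsqrtd.ext h.1 h.2)
  unfold Nm
  rcases this with h | h <;> positivity

lemma Nm_gr_mul_Nm (a b : GaussianInt) :
    Nm (gr a b) * Nm b =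
      (a.re * b.re + a.im * b.im - (gq a b).re * Nm b) ^ 2 +
        (a.im * b.re - a.re * b.im - (gq a b).im * Nm b) ^ 2 := by
  simp only [Nm, gr, Zsqrtd.re_sub, Zsqrtd.im_sub, Zsqrtd.re_mul, Zsqrtd.im_mul]
  ring

theorem two_mul_Nm_gr_le (a b : GaussianInt) (hb : b ≠ 0) : 2 * Nm (gr a b) ≤ Nm b := by
  have hN := Nm_pos hb
  have hX : 2 * |a.re * b.re + a.im * b.im - (gq a b).re * Nm b| ≤ Nm b :=
    two_mul_abs_sub_nint_mul_le _ _ hN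
  have hY : 2 * |a.im * b.re - a.re * b.im - (gq a b).im * Nm b| ≤ Nm b :=
    two_mul_abs_sub_nint_mul_le _ _ hN
  have hsum := Nm_gr_mul_Nm a b
  refine le_of_mul_le_mul_right ?_ hN
  nlinarith [sq_abs (a.re * b.re + a.im * b.im - (gq a b).re * Nm b),
    sq_abs (a.im * b.re - a.re * b.im - (gq a b).im * Nm b),
    abs_nonneg (a.re * b.re + a.im * b.im - (gq a b).re * Nm b),
    abs_nonneg (a.im * b.re - a.re * b.im - (gq a b).im * Nm b)]

lemma mul_add_one_le_of_dvd_of_mul_lt {d x m : ℤ} (hd : 0 < d) (hdx : d ∣ x) (h : d * m < x) :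
    d * (m + 1) ≤ x := by
  obtain ⟨c, rfl⟩ := hdx
  have : m < c := lt_of_mul_lt_mul_left h hd.le
  nlinarith

lemma linf_add_mm (z : GaussianInt) : linf z + mm z = l1 z := max_add_min _ _

lemma Nm_eq_sq_linf_add_sq_mm (z : GaussianInt) : Nm z = linf z ^ 2 + mm z ^ 2 := by
  unfold Nm linf mm
  rcases le_total |z.re| |z.im| with h | h
  · rw [max_eq_right h, min_eq_left h, sq_abs, sq_abs, add_comm]
  · rw [max_eq_left h, min_eq_right h, sq_abs, sq_abs]

lemma mm_nonneg (z : GaussianInt) : 0 ≤ mm z := le_min (abs_nonneg _) (abs_nonneg _)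

section Divisibility

variable {d : ℤ} {z : GaussianInt}

lemma dvd_linf (hre : d ∣ z.re) (him : d ∣ z.im) : d ∣ linf z := by
  rcases max_choice |z.re| |z.im| with h | h <;> simp [linf, h, hre, him]

lemma dvd_mm (hre : d ∣ z.re) (him : d ∣ z.im) : d ∣ mm z := by
  rcases min_choice |z.re| |z.im| with h | h <;> simp [mm, h, hre, him]

end Divisibility

lemma two_pow_v2_dvd_gcd (z : GaussianInt) : (2 : ℤ) ^ v2 z ∣ (Int.gcd z.re z.im : ℤ) := by
  exact_mod_cast pow_padicValNat_dvd

lemma two_pow_v2_dvd_re (z : GaussianInt) : 2 ^ v2 z ∣ z.re :=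
  (two_pow_v2_dvd_gcd z).trans (Int.gcd_dvd_left _ _)

lemma two_pow_v2_dvd_im (z : GaussianInt) : 2 ^ v2 z ∣ z.im :=
  (two_pow_v2_dvd_gcd z).trans (Int.gcd_dvd_right _ _)

lemma linf_pos {z : GaussianInt} (hz : z ≠ 0) : 0 < linf z := by
  have := Nm_pos hz
  rw [Nm_eq_sq_linf_add_sq_mm] at this
  have : mm z ≤ linf z := min_le_max
  nlinarith [mm_nonneg z]

def phiIndex (z : GaussianInt) : ℕ :=
  sInf {n : ℕ | |z.re| ≤ 2 ^ v2 z * (w n - 2) ∧ |z.im| ≤ 2 ^ v2 z * (w n - 2)}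

lemma phi_eq_of_l1_le {z : GaussianInt} (h : l1 z ≤ 2 ^ v2 z * (w (phiIndex z + 1) - 3)) :
    phi z = phiIndex z + 2 * v2 z := if_pos h

lemma phi_eq_of_lt_l1 {z : GaussianInt} (h : 2 ^ v2 z * (w (phiIndex z + 1) - 3) < l1 z) :
    phi z = phiIndex z + 2 * v2 z + 1 := if_neg h.not_ge

lemma phi_eq_or (z : GaussianInt) :
    phi z = phiIndex z + 2 * v2 z ∨ phi z = phiIndex z + 2 * v2 z + 1 := by
  by_cases h : l1 z ≤ 2 ^ v2 z * (w (phiIndex z + 1) - 3)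
  · exact .inl (phi_eq_of_l1_le h)
  · exact .inr (phi_eq_of_lt_l1 (not_le.mp h))

lemma linf_le_iff {z : GaussianInt} {c : ℤ} : linf z ≤ c ↔ |z.re| ≤ c ∧ |z.im| ≤ c :=
  max_le_iff

lemma exists_linf_le (z : GaussianInt) : ∃ n, linf z ≤ 2 ^ v2 z * (w n - 2) := by
  set K := (linf z).toNat
  refine ⟨2 * K, ?_⟩
  have hK : linf z ≤ K := Int.self_le_toNat _
  have h2K : (K : ℤ) < 2 ^ K := by exact_mod_cast Nat.lt_two_pow_self
  have hj := one_le_pow₀ (M₀ := ℤ) (a := 2) (n := v2 z) (by norm_num)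
  rw [w_two_mul]
  nlinarith

lemma linf_le_phiIndex (z : GaussianInt) : linf z ≤ 2 ^ v2 z * (w (phiIndex z) - 2) := by
  obtain ⟨n, hn⟩ := exists_linf_le z
  have hmem : n ∈ {n : ℕ | |z.re| ≤ 2 ^ v2 z * (w n - 2) ∧ |z.im| ≤ 2 ^ v2 z * (w n - 2)} :=
    linf_le_iff.mp hn
  exact linf_le_iff.mpr (Nat.sInf_mem ⟨n, hmem⟩)

lemma lt_linf_of_lt_phiIndex {z : GaussianInt} {k : ℕ} (hk : k < phiIndex z) :
    2 ^ v2 z * (w k - 2) < linf z :=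
  not_le.mp fun h => Nat.notMem_of_lt_sInf hk (linf_le_iff.mp h)

theorem two_pow_phi_le_Nm {z : GaussianInt} (hz : z ≠ 0) : (2 : ℤ) ^ phi z ≤ Nm z := by
  set j := v2 z
  have hj : (0 : ℤ) < 2 ^ j := by positivity
  have hdvd_linf : 2 ^ j ∣ linf z := dvd_linf (two_pow_v2_dvd_re z) (two_pow_v2_dvd_im z)
  have hNm := Nm_eq_sq_linf_add_sq_mm z
  have hm := mm_nonneg z
  cases hk : phiIndex z with
  | zero =>
    by_cases hl : l1 z ≤ 2 ^ j * (w (phiIndex z + 1) - 3)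
    · have hlinf : 2 ^ j * (0 + 1) ≤ linf z :=
        mul_add_one_le_of_dvd_of_mul_lt hj hdvd_linf (by simpa using linf_pos hz)
      rw [phi_eq_of_l1_le hl, hk, zero_add, pow_mul']
      nlinarith
    · have hdvd_l1 : 2 ^ j ∣ l1 z := linf_add_mm z ▸ dvd_add hdvd_linf
        (dvd_mm (two_pow_v2_dvd_re z) (two_pow_v2_dvd_im z))
      have hw : w (phiIndex z + 1) = 4 := by rw [hk]; rfl
      have hl1 : 2 ^ j * (1 + 1) ≤ l1 z :=
        mul_add_one_le_of_dvd_of_mul_lt hj hdvd_l1 (by rw [hw] at hl; linarith)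
      rw [phi_eq_of_lt_l1 (not_le.mp hl), hk, zero_add, pow_succ, pow_mul']
      rw [← linf_add_mm] at hl1
      nlinarith [sq_nonneg (linf z - mm z)]
  | succ k =>
    have hlinf : 2 ^ j * (w k - 2 + 1) ≤ linf z := mul_add_one_le_of_dvd_of_mul_lt hj hdvd_linf
      (lt_linf_of_lt_phiIndex (hk ▸ k.lt_succ_self))
    have hφ : phi z ≤ k + 2 + 2 * j := by rcases phi_eq_or z with h | h <;> omega
    have hw := two_pow_le_sq_w_sub_one k
    calc (2 : ℤ) ^ phi z ≤ 2 ^ (k + 2 + 2 * j) := pow_le_pow_right₀ (by norm_num) hφ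
      _ = (2 ^ j) ^ 2 * 2 ^ (k + 2) := by ring
      _ ≤ (2 ^ j) ^ 2 * (w k - 1) ^ 2 := by gcongr
      _ ≤ linf z ^ 2 := by
        rw [← mul_pow]
        exact pow_le_pow_left₀ (by nlinarith [three_le_w k]) (by linarith) 2
      _ ≤ Nm z := by nlinarith

lemma gcd_eq_linf_of_mm_eq_zero {z : GaussianInt} (h : mm z = 0) :
    (Int.gcd z.re z.im : ℤ) = linf z := by
  rcases min_choice |z.re| |z.im| with h' | h' <;> rw [mm, h', abs_eq_zero] at h
  · simp [linf, h, Int.gcd]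
  · simp [linf, h, Int.gcd]

lemma phiIndex_eq_zero_and_Nm_eq_of_lt {b : GaussianInt} (hb : b ≠ 0)
    (h : 2 ^ v2 b * (w (phiIndex b) - 3) < linf b - mm b) :
    phiIndex b = 0 ∧ Nm b = (2 ^ v2 b) ^ 2 := by
  set j := v2 b
  have hj : (0 : ℤ) < 2 ^ j := by positivity
  have hdvd : 2 ^ j ∣ linf b - mm b := dvd_sub
    (dvd_linf (two_pow_v2_dvd_re b) (two_pow_v2_dvd_im b))
    (dvd_mm (two_pow_v2_dvd_re b) (two_pow_v2_dvd_im b))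
  have hge := mul_add_one_le_of_dvd_of_mul_lt hj hdvd h
  have hle := linf_le_phiIndex b
  have hmm : mm b = 0 := le_antisymm (by linarith) (mm_nonneg b)
  have hlinf : linf b = 2 ^ j * (w (phiIndex b) - 2) := by linarith
  have hindex : phiIndex b = 0 := by
    by_contra hne
    obtain ⟨c, hc⟩ := two_dvd_w_sub_two hne
    have hgcd : Int.gcd b.re b.im ≠ 0 := fun h0 =>
      hb (Zsqrtd.ext (Int.gcd_eq_zero_iff.mp h0).1 (Int.gcd_eq_zero_iff.mp h0).2)
    apply pow_succ_padicValNat_not_dvd (p := 2) hgcd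
    have : (2 : ℤ) ^ (j + 1) ∣ Int.gcd b.re b.im := by
      rw [gcd_eq_linf_of_mm_eq_zero hmm, hlinf, hc, pow_succ]
      exact ⟨c, by ring⟩
    exact_mod_cast this
  refine ⟨hindex, ?_⟩
  rw [Nm_eq_sq_linf_add_sq_mm, hmm, hlinf, hindex, show w 0 = 3 by rfl]
  ring

theorem stmt12_general (a b r : GaussianInt) (n : ℕ) (hb : b ≠ 0) (hr : r = gr a b)
    (hr0 : r ≠ 0) (hphi : phi r ≥ phi b) (hn : phi b = n) :
    linf b - mm b ≤ w n - 3 * 2 ^ (v2 b) := by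
  subst hn hr
  have hlinf := linf_le_phiIndex b
  have hmm := mm_nonneg b
  rcases phi_eq_or b with hφ | hφ
  · rw [hφ, w_add_two_mul]
    by_contra! hlt
    obtain ⟨hindex, hNm⟩ := phiIndex_eq_zero_and_Nm_eq_of_lt hb (by linarith)
    have hgr := two_mul_Nm_gr_le a b hb
    have hpow : (2 : ℤ) ^ (2 * v2 b) ≤ 2 ^ phi (gr a b) :=
      pow_le_pow_right₀ (by norm_num) (by omega)
    rw [pow_mul'] at hpow
    linarith [two_pow_phi_le_Nm hr0, Nm_pos hr0]
  · rw [hφ, add_right_comm, w_add_two_mul]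
    nlinarith [w_add_one_le_w_succ (phiIndex b), pow_pos (two_pos (α := ℤ)) (v2 b)]

theorem stmt12 (a b r : GaussianInt) (n : ℕ) (ha : a ≠ 0) (hb : b ≠ 0) (hr : r = gr a b)
    (hr0 : r ≠ 0) (hphi : phi r ≥ phi b) (hn : phi b = n) :
    linf b - mm b ≤ w n - 3 * 2 ^ (v2 b) :=
  stmt12_general a b r n hb hr hr0 hphi hn
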